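/- arXiv:2110.03376 — 2 statements merged into one kernel-verified Lean document; each statement's English description precedes it below -/
import Mathlib

section
/- Let k ≥ 2 be an integer and f, s ∈ ℝ. Let (z,w) : I → (ℂ\{0}) × ℂ be a C¹ solution of z'(t) = w(t), w'(t) = −2(k−1)·f·|z(t)|^{2k−4}·z(t) (Hamilton's equations for Ĥ(z,w) = |w|²/2 + f|z|^{2k−2} + s), and suppose |w(t₀)|²/2 + f|z(t₀)|^{2k−2} + s = 0 for some t₀ ∈ I. Then this energy relation holds for all t ∈ I; moreover, setting τ(t) := k·∫_{t₀}^t |z(u)|^{2k−2} du with inverse function σ, the curves q(s) := z(σ(s))^k and p(s) := w(σ(s))/conj(z(σ(s)))^{k−1} satisfy q'(s) = p(s), p'(s) = (2−2/k)·s·q(s)/|q(s)|^{4−2/k}, and |p(s)|²/2 + s/|q(s)|^{2−2/k} + f = 0 for all s. In other words, the k-th power conformal map transforms the zero-energy flow of the Hamiltonian |w|²/2 + f|z|^{2k−2} + s into the zero-energy flow of the Hamiltonian |p|²/2 + s/|q|^{2−2/k} + f, up to time reparametrization. -/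
/-!
Energy is conserved because the force `-2(k-1) f |z|^{2k-4} z` is minus the gradient of the
potential `f |z|^{2k-2}`. Since `τ' = k |z|^{2k-2} > 0`, `τ` is a strictly increasing change of
time with continuous inverse, and the chain rule gives
`q' = k z^{k-1} w / (k |z|^{2k-2}) = w / z̄^{k-1} = p`.
Differentiating `p = w / z̄^{k-1}` in the same way and eliminating `|w|²` by the zero-energy relation
`|w|² = -2 (f |z|^{2k-2} + s)`, all terms containing `f` cancel and only the Kepler force with
coupling constant `s` survives. Dividing the zero-energy relation by `|z|^{2k-2} = |q|^{2-2/k}`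
gives the energy relation for `(q, p)`.
-/

open Set Filter intervalIntegral ComplexConjugate
open scoped Topology RealInnerProductSpace

theorem Set.OrdConnected.hasDerivWithinAt_integral {E : Type*} [NormedAddCommGroup E]
    [NormedSpace ℝ E] [CompleteSpace E] {I : Set ℝ} (hI : I.OrdConnected) {g : ℝ → E}
    (hg : ContinuousOn g I) {a t : ℝ} (ha : a ∈ I) (ht : t ∈ I) :
    HasDerivWithinAt (fun u => ∫ x in a..u, g x) (g t) I t := by
  have : FTCFilter t (𝓝[I] t) (𝓝[I] t) :=
    { toTendstoIxxClass := tendstoIxxClass_of_subset fun _ _ => Ioc_subset_Icc_self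
      pure_le := pure_le_nhdsWithin ht
      le_nhds := inf_le_left
      meas_gen := hI.measurableSet.nhdsWithin_isMeasurablyGenerated t }
  exact integral_hasDerivWithinAt_right (hg.mono (hI.uIcc_subset ha ht)).intervalIntegrable
    (hg.stronglyMeasurableAtFilter_nhdsWithin hI.measurableSet t) (hg t ht)

theorem Convex.strictMonoOn_of_hasDerivWithinAt_pos {I : Set ℝ} (hI : Convex ℝ I)
    {f f' : ℝ → ℝ} (hf : ∀ x ∈ I, HasDerivWithinAt f (f' x) I x) (hf' : ∀ x ∈ I, 0 < f' x) :
    StrictMonoOn f I :=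
  _root_.strictMonoOn_of_hasDerivWithinAt_pos hI (fun x hx => (hf x hx).continuousWithinAt)
    (fun x hx => (hf x (interior_subset hx)).mono interior_subset)
    (fun x hx => hf' x (interior_subset hx))

theorem StrictMonoOn.continuousOn_image_of_leftInvOn {τ σ : ℝ → ℝ} {I : Set ℝ}
    (hI : I.OrdConnected) (hτc : ContinuousOn τ I) (hmono : StrictMonoOn τ I)
    (hσ : LeftInvOn σ τ I) : ContinuousOn σ (τ '' I) := by
  -- the subspace topologies of `I` and of its (order-connected) image are the order topologies
  have : (τ '' I).OrdConnected := (hI.isPreconnected.image τ hτc).ordConnected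
  have hrestrict : (τ '' I).domRestrict σ = Subtype.val ∘ (hmono.orderIso τ I).symm := by
    ext ⟨_, x, hx, rfl⟩
    have : (hmono.orderIso τ I).symm ⟨τ x, x, hx, rfl⟩ = ⟨x, hx⟩ :=
      (hmono.orderIso τ I).symm_apply_eq.2 rfl
    simp [this, hσ hx]
  rw [continuousOn_iff_continuous_domRestrict, hrestrict]
  exact continuous_subtype_val.comp (hmono.orderIso τ I).symm.continuous

section LeftInverse

variable {𝕜 : Type*} [NontriviallyNormedField 𝕜]

theorem HasDerivWithinAt.of_local_left_inverse {f g : 𝕜 → 𝕜} {f' a : 𝕜} {s t : Set 𝕜}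
    (hg : Tendsto g (𝓝[s] a) (𝓝[t] (g a))) (hf : HasDerivWithinAt f f' t (g a)) (hf' : f' ≠ 0)
    (ha : a ∈ s) (hfg : ∀ᶠ y in 𝓝[s] a, f (g y) = y) : HasDerivWithinAt g f'⁻¹ s a :=
  HasFDerivWithinAt.of_local_left_inverse
    (f' := ContinuousLinearEquiv.unitsEquivAut 𝕜 (Units.mk0 f' hf')) hg hf ha hfg

theorem HasDerivWithinAt.comp_leftInvOn {E : Type*} [NormedAddCommGroup E] [NormedSpace 𝕜 E]
    {F : 𝕜 → E} {τ σ : 𝕜 → 𝕜} {I : Set 𝕜} {d : E} {c t : 𝕜}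
    (hF : HasDerivWithinAt F d I t) (hτ : HasDerivWithinAt τ c I t) (hc : c ≠ 0) (ht : t ∈ I)
    (hσ : LeftInvOn σ τ I) (hσc : ContinuousWithinAt σ (τ '' I) (τ t)) :
    HasDerivWithinAt (F ∘ σ) (c⁻¹ • d) (τ '' I) (τ t) := by
  have hmaps : MapsTo σ (τ '' I) I := by
    rintro _ ⟨x, hx, rfl⟩
    rwa [hσ hx]
  rw [← hσ ht] at hF hτ
  have hσd : HasDerivWithinAt σ c⁻¹ (τ '' I) (τ t) :=
    .of_local_left_inverse (hσc.tendsto_nhdsWithin hmaps) hτ hc (mem_image_of_mem τ ht)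
      (eventually_mem_nhdsWithin.mono hσ.rightInvOn_image)
  exact hF.scomp (τ t) hσd hmaps

end LeftInverse

section EnergyConservation

variable {E : Type*} [NormedAddCommGroup E] [InnerProductSpace ℝ E]

theorem HasDerivWithinAt.norm_pow_two_mul_succ {z : ℝ → E} {w : E} {s : Set ℝ} {t : ℝ}
    (hz : HasDerivWithinAt z w s t) (n : ℕ) :
    HasDerivWithinAt (fun u => ‖z u‖ ^ (2 * (n + 1)))
      (2 * (n + 1) * ‖z t‖ ^ (2 * n) * ⟪z t, w⟫) s t := by
  simp_rw [pow_mul]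
  refine (hz.norm_sq.fun_pow (n + 1)).congr_deriv ?_
  push_cast
  ring

theorem powerPotential_energy_eq {I : Set ℝ} (hI : Convex ℝ I) {z w : ℝ → E} (n : ℕ) (f : ℝ)
    (hz : ∀ t ∈ I, HasDerivWithinAt z (w t) I t)
    (hw : ∀ t ∈ I, HasDerivWithinAt w (-(2 * (n + 1) * f * ‖z t‖ ^ (2 * n)) • z t) I t)
    {t₀ t : ℝ} (ht₀ : t₀ ∈ I) (ht : t ∈ I) :
    ‖w t‖ ^ 2 / 2 + f * ‖z t‖ ^ (2 * (n + 1)) = ‖w t₀‖ ^ 2 / 2 + f * ‖z t₀‖ ^ (2 * (n + 1)) := by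
  have hE' : ∀ u ∈ I,
      HasDerivWithinAt (fun u => ‖w u‖ ^ 2 / 2 + f * ‖z u‖ ^ (2 * (n + 1))) 0 I u := by
    intro u hu
    refine (((hw u hu).norm_sq.div_const 2).add
      (((hz u hu).norm_pow_two_mul_succ n).const_mul f)).congr_deriv ?_
    rw [inner_smul_right, real_inner_comm]
    ring
  have := hI.norm_image_sub_le_of_norm_hasDerivWithin_le (C := 0) hE' (fun _ _ => by simp) ht₀ ht
  rwa [zero_mul, norm_le_zero_iff, sub_eq_zero] at this

end EnergyConservation

theorem Real.pow_rpow_sub_div {x : ℝ} (hx : 0 < x) {k : ℕ} (hk : k ≠ 0) (a b : ℝ) :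
    (x ^ k) ^ (a - b / k) = (x ^ k) ^ a / x ^ b := by
  rw [Real.rpow_sub (by positivity), ← Real.rpow_natCast x k, ← Real.rpow_mul hx.le (z := b / k),
    mul_div_cancel₀ _ (Nat.cast_ne_zero.2 hk)]

theorem Complex.ofReal_norm_pow_two_mul (Z : ℂ) (m : ℕ) :
    (‖Z‖ : ℂ) ^ (2 * m) = Z ^ m * conj Z ^ m := by
  rw [← mul_pow, Complex.mul_conj', pow_mul]

theorem conformalPow_velocity (n : ℕ) {Z : ℂ} (hZ : Z ≠ 0) (W : ℂ) :
    (((n + 2 : ℕ) : ℝ) * ‖Z‖ ^ (2 * (n + 1)))⁻¹ • (((n + 2 : ℕ) : ℂ) * Z ^ (n + 1) * W)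
      = W / conj Z ^ (n + 1) := by
  have hn : (n : ℂ) + 2 ≠ 0 := by exact_mod_cast (by omega : n + 2 ≠ 0)
  have hcZ : conj Z ≠ 0 := by simpa using hZ
  rw [Complex.real_smul]
  push_cast
  rw [Complex.ofReal_norm_pow_two_mul]
  field_simp

theorem conformalPow_acceleration (n : ℕ) (f s : ℝ) {Z W : ℂ} (hZ : Z ≠ 0)
    (hE : ‖W‖ ^ 2 / 2 + f * ‖Z‖ ^ (2 * (n + 1)) + s = 0) :
    (((n + 2 : ℕ) : ℝ) * ‖Z‖ ^ (2 * (n + 1)))⁻¹ •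
      (((-(2 * ((n : ℝ) + 1) * f * ‖Z‖ ^ (2 * n))) • Z * conj Z ^ (n + 1)
        - W * (((n + 1 : ℕ) : ℂ) * conj Z ^ n * conj W)) / (conj Z ^ (n + 1)) ^ 2)
      = ((2 - 2 / ((n + 2 : ℕ) : ℝ)) * s / ‖Z ^ (n + 2)‖ ^ ((4 : ℝ) - 2 / ((n + 2 : ℕ) : ℝ)))
        • Z ^ (n + 2) := by
  have hWW : W * conj W = -2 * (f * (‖Z‖ : ℂ) ^ (2 * (n + 1)) + s) := by
    rw [Complex.mul_conj']
    exact_mod_cast (by linarith : ‖W‖ ^ 2 = -2 * (f * ‖Z‖ ^ (2 * (n + 1)) + s))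
  have hnum : (-(2 * ((n : ℝ) + 1) * f * ‖Z‖ ^ (2 * n))) • Z * conj Z ^ (n + 1)
      - W * (((n + 1 : ℕ) : ℂ) * conj Z ^ n * conj W) = 2 * (n + 1) * s * conj Z ^ n := by
    rw [Complex.real_smul]
    push_cast
    rw [Complex.ofReal_norm_pow_two_mul] at hWW ⊢
    linear_combination (-(n + 1) * conj Z ^ n) * hWW
  have hpos : 0 < ‖Z‖ := norm_pos_iff.2 hZ
  have hZ' : (‖Z‖ : ℂ) ≠ 0 := by exact_mod_cast hpos.ne'
  have hcZ : conj Z ≠ 0 := by simpa using hZ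
  have hn : (n : ℂ) + 2 ≠ 0 := by exact_mod_cast (by omega : n + 2 ≠ 0)
  rw [hnum, norm_pow, Real.pow_rpow_sub_div hpos (by omega), Real.rpow_two]
  norm_num
  have hden : ((‖Z‖ : ℂ) ^ (n + 2)) ^ 4 / (‖Z‖ : ℂ) ^ 2 = (‖Z‖ : ℂ) ^ (2 * (2 * n + 3)) := by
    field_simp
    ring
  rw [hden, Complex.ofReal_norm_pow_two_mul, Complex.ofReal_norm_pow_two_mul]
  field_simp
  ring

theorem conformalPow_energy (n : ℕ) (f s : ℝ) {Z W : ℂ} (hZ : Z ≠ 0)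
    (hE : ‖W‖ ^ 2 / 2 + f * ‖Z‖ ^ (2 * (n + 1)) + s = 0) :
    ‖W / conj Z ^ (n + 1)‖ ^ 2 / 2 + s / ‖Z ^ (n + 2)‖ ^ ((2 : ℝ) - 2 / ((n + 2 : ℕ) : ℝ)) + f
      = 0 := by
  have hpos : 0 < ‖Z‖ := norm_pos_iff.2 hZ
  rw [norm_div, norm_pow, norm_pow, Complex.norm_conj,
    Real.pow_rpow_sub_div hpos (by omega), Real.rpow_two]
  norm_num
  field_simp
  linear_combination 2 * (‖Z‖ ^ (n + 2)) ^ 2 * hE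

/-- The k-th power conformal map transforms the zero-energy flow of the Hooke-type
Hamiltonian `|w|²/2 + f|z|^{2k−2} + s` into the zero-energy flow of the Kepler-type
Hamiltonian `|p|²/2 + s/|q|^{2−2/k} + f`, up to the time reparametrization
`τ(t) = k·∫_{t₀}^t |z(u)|^{2k−2} du`. -/
theorem stmt_2 (k : ℕ) (hk : 2 ≤ k) (f s : ℝ)
    (I : Set ℝ) (hI : Convex ℝ I) (t₀ : ℝ) (ht₀ : t₀ ∈ I)
    (z w : ℝ → ℂ) (hz0 : ∀ t ∈ I, z t ≠ 0)
    (hz : ∀ t ∈ I, HasDerivWithinAt z (w t) I t)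
    (hw : ∀ t ∈ I, HasDerivWithinAt w
      ((-(2 * ((k : ℝ) - 1) * f * ‖z t‖ ^ (2 * k - 4))) • z t) I t)
    (hE : ‖w t₀‖ ^ 2 / 2 + f * ‖z t₀‖ ^ (2 * k - 2) + s = 0)
    (τ : ℝ → ℝ)
    (hτ : τ = fun t => (k : ℝ) * ∫ u in t₀..t, ‖z u‖ ^ (2 * k - 2))
    (σ : ℝ → ℝ) (hσ : ∀ t ∈ I, σ (τ t) = t)
    (q p : ℝ → ℂ)
    (hqdef : ∀ u : ℝ, q u = z (σ u) ^ k)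
    (hpdef : ∀ u : ℝ, p u = w (σ u) / (starRingEnd ℂ (z (σ u))) ^ (k - 1)) :
    (∀ t ∈ I, ‖w t‖ ^ 2 / 2 + f * ‖z t‖ ^ (2 * k - 2) + s = 0) ∧
    (∀ t ∈ I,
      HasDerivWithinAt q (p (τ t)) (τ '' I) (τ t) ∧
      HasDerivWithinAt p
        (((2 - 2 / (k : ℝ)) * s / ‖q (τ t)‖ ^ ((4 : ℝ) - 2 / (k : ℝ)))
          • q (τ t)) (τ '' I) (τ t) ∧
      ‖p (τ t)‖ ^ 2 / 2
        + s / ‖q (τ t)‖ ^ ((2 : ℝ) - 2 / (k : ℝ)) + f = 0) := by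
  -- writing `k = n + 2` removes the truncated subtractions `2k - 4`, `2k - 2`, `k - 1`
  obtain ⟨n, rfl⟩ : ∃ n, k = n + 2 := ⟨k - 2, by omega⟩
  simp only [show 2 * (n + 2) - 2 = 2 * (n + 1) by omega, show 2 * (n + 2) - 4 = 2 * n by omega,
    show n + 2 - 1 = n + 1 by omega, show ((n + 2 : ℕ) : ℝ) - 1 = n + 1 by push_cast; ring]
    at hw hE hτ hpdef ⊢
  have henergy : ∀ t ∈ I, ‖w t‖ ^ 2 / 2 + f * ‖z t‖ ^ (2 * (n + 1)) + s = 0 := fun t ht => by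
    rw [powerPotential_energy_eq hI n f hz hw ht₀ ht, hE]
  have hzc : ContinuousOn z I := fun t ht => (hz t ht).continuousWithinAt
  have hτ' : ∀ t ∈ I, HasDerivWithinAt τ (((n + 2 : ℕ) : ℝ) * ‖z t‖ ^ (2 * (n + 1))) I t :=
    fun t ht => hτ ▸ (hI.ordConnected.hasDerivWithinAt_integral (hzc.norm.pow _) ht₀ ht).const_mul _
  have hτ'_pos : ∀ t ∈ I, 0 < ((n + 2 : ℕ) : ℝ) * ‖z t‖ ^ (2 * (n + 1)) := fun t ht => by
    have := norm_pos_iff.2 (hz0 t ht); positivity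
  have hσc : ContinuousOn σ (τ '' I) :=
    (hI.strictMonoOn_of_hasDerivWithinAt_pos hτ' hτ'_pos).continuousOn_image_of_leftInvOn
      hI.ordConnected (fun t ht => (hτ' t ht).continuousWithinAt) hσ
  refine ⟨henergy, fun t ht => ?_⟩
  have hreparam {F : ℝ → ℂ} {d : ℂ} (hF : HasDerivWithinAt F d I t) :=
    hF.comp_leftInvOn (hτ' t ht) (hτ'_pos t ht).ne' ht hσ (hσc _ (mem_image_of_mem τ ht))
  rw [show q = (fun x => z x ^ (n + 2)) ∘ σ from funext hqdef,
    show p = (fun x => w x / conj (z x) ^ (n + 1)) ∘ σ from funext hpdef]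
  simp only [Function.comp_apply, hσ t ht]
  refine ⟨?_, ?_, conformalPow_energy n f s (hz0 t ht) (henergy t ht)⟩
  · exact (hreparam ((hz t ht).fun_pow (n + 2))).congr_deriv
      (conformalPow_velocity n (hz0 t ht) (w t))
  · have hconj : HasDerivWithinAt (fun x => conj (z x)) (conj (w t)) I t := (hz t ht).star
    have hden : conj (z t) ^ (n + 1) ≠ 0 := pow_ne_zero _ (by simpa using hz0 t ht)
    exact (hreparam ((hw t ht).fun_div (hconj.fun_pow (n + 1)) hden)).congr_deriv
      (conformalPow_acceleration n f s (hz0 t ht) (henergy t ht))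
end

section
/- Let f ∈ ℝ and a, b > 0, and define G(z,w) := (a² + b²)·(2f·z₁² + w₁²) + (z₁w₂ − z₂w₁)² for z, w ∈ ℝ². Then: (i) for every twice-differentiable curve z : I → ℝ² satisfying z''(t) = −2f·z(t), the function t ↦ G(z(t), z'(t)) is constant; (ii) for every point z on the centered hyperbola {z : z₁²/a² − z₂²/b² = 1}, setting n := (z₁/a², −z₂/b²) and w' := w − 2(⟨w,n⟩/‖n‖²)·n for any w ∈ ℝ², one has G(z, w') = G(z, w). Hence G is a first integral of the Hooke billiard in the centered hyperbola. -/
/-!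
Along `z'' = −2f·z` both the energy `2f·z₁² + w₁²` of the first coordinate and the angular
momentum `z₁w₂ − z₂w₁` are conserved, hence so is `G = c·(2f·z₁² + w₁²) + (z₁w₂ − z₂w₁)²` for
every `c`. For fixed `z`, `G(z, ·)` is a quadratic form plus a constant; the reflection in the
normal `n` sends `αn + βn⊥` to `−αn + βn⊥`, so it preserves `G(z, ·)` exactly when the polar
form of `G(z, ·)` vanishes on `(n, n⊥)`. For the normal of the hyperbola
`z₁²/a² − z₂²/b² = 1` and `c = a² + b²` this holds identically.
-/

def hookeG (f c : ℝ) (z w : ℝ × ℝ) : ℝ :=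
  c * (2 * f * z.1 ^ 2 + w.1 ^ 2) + (z.1 * w.2 - z.2 * w.1) ^ 2

theorem Convex.eq_of_hasDerivWithinAt_zero {E : Type*} [NormedAddCommGroup E] [NormedSpace ℝ E]
    {s : Set ℝ} {g : ℝ → E} (hs : Convex ℝ s) (hg : ∀ t ∈ s, HasDerivWithinAt g 0 s t)
    {x y : ℝ} (hx : x ∈ s) (hy : y ∈ s) : g x = g y := by
  have h := hs.norm_image_sub_le_of_norm_hasDerivWithin_le hg (C := 0) (by simp) hy hx
  rw [zero_mul, norm_le_zero_iff, sub_eq_zero] at h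
  exact h

theorem hasDerivWithinAt_hookeG {f c : ℝ} {s : Set ℝ} {z v : ℝ → ℝ × ℝ} {t : ℝ}
    (hz : HasDerivWithinAt z (v t) s t) (hv : HasDerivWithinAt v ((-(2 * f)) • z t) s t) :
    HasDerivWithinAt (fun u ↦ hookeG f c (z u) (v u)) 0 s t := by
  have hz₁ : HasDerivWithinAt (fun u ↦ (z u).1) (v t).1 s t := hz.fst
  have hz₂ : HasDerivWithinAt (fun u ↦ (z u).2) (v t).2 s t := hz.snd
  have hv₁ : HasDerivWithinAt (fun u ↦ (v u).1) (-(2 * f) * (z t).1) s t := hv.fst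
  have hv₂ : HasDerivWithinAt (fun u ↦ (v u).2) (-(2 * f) * (z t).2) s t := hv.snd
  have hG := (((hz₁.pow 2).const_mul (2 * f)).add (hv₁.pow 2)).const_mul c |>.add
    (((hz₁.mul hv₂).sub (hz₂.mul hv₁)).pow 2)
  refine hG.congr_deriv ?_
  simp only [Pi.mul_apply, Pi.sub_apply]
  ring

theorem hookeG_eq_of_hooke {f c : ℝ} {I : Set ℝ} (hI : Convex ℝ I) {z v : ℝ → ℝ × ℝ}
    (hz : ∀ t ∈ I, HasDerivWithinAt z (v t) I t)
    (hv : ∀ t ∈ I, HasDerivWithinAt v ((-(2 * f)) • z t) I t)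
    {t t' : ℝ} (ht : t ∈ I) (ht' : t' ∈ I) :
    hookeG f c (z t) (v t) = hookeG f c (z t') (v t') :=
  hI.eq_of_hasDerivWithinAt_zero (fun s hs ↦ hasDerivWithinAt_hookeG (hz s hs) (hv s hs)) ht ht'

/-- For `n = 0` the division returns `0`, so this is the identity. -/
noncomputable def reflect (n w : ℝ × ℝ) : ℝ × ℝ :=
  w - (2 * ((w.1 * n.1 + w.2 * n.2) / (n.1 ^ 2 + n.2 ^ 2))) • n

/-- `n` is an eigenvector of the quadratic form `w ↦ c·w₁² + (z₁w₂ − z₂w₁)²`, i.e. its polar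
form vanishes on `(n, (−n₂, n₁))`. -/
def IsPrincipalAxis (c : ℝ) (z n : ℝ × ℝ) : Prop :=
  c * n.1 * n.2 = (z.1 * n.2 - z.2 * n.1) * (z.1 * n.1 + z.2 * n.2)

theorem hookeG_reflect_of_isPrincipalAxis {f c : ℝ} {z n : ℝ × ℝ} (h : IsPrincipalAxis c z n)
    (w : ℝ × ℝ) : hookeG f c z (reflect n w) = hookeG f c z w := by
  unfold IsPrincipalAxis at h
  obtain ⟨n₁, n₂⟩ := n
  rcases eq_or_ne (n₁ ^ 2 + n₂ ^ 2) 0 with hn | hn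
  · simp [reflect, hn]
  set s := 2 * ((w.1 * n₁ + w.2 * n₂) / (n₁ ^ 2 + n₂ ^ 2)) with hs
  have hs' : s * (n₁ ^ 2 + n₂ ^ 2) = 2 * (w.1 * n₁ + w.2 * n₂) := by
    rw [hs, mul_assoc, div_mul_cancel₀ _ hn]
  simp only [reflect, hookeG, Prod.fst_sub, Prod.snd_sub, Prod.smul_fst, Prod.smul_snd,
    smul_eq_mul] at h ⊢
  rw [← hs]
  -- `G(z, w − s n) − G(z, w) = s·(s·q(n) − 2·B(w, n))` with `q` the quadratic part, `B` its polar
  have key : s * (c * n₁ ^ 2 + (z.1 * n₂ - z.2 * n₁) ^ 2) =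
      2 * (c * w.1 * n₁ + (z.1 * w.2 - z.2 * w.1) * (z.1 * n₂ - z.2 * n₁)) := by
    apply mul_left_cancel₀ hn
    linear_combination
      (c * n₁ ^ 2 + (z.1 * n₂ - z.2 * n₁) ^ 2) * hs' + 2 * (w.2 * n₁ - w.1 * n₂) * h
  linear_combination s * key

theorem isPrincipalAxis_hyperbola_normal {a b : ℝ} (ha : a ≠ 0) (hb : b ≠ 0) {z : ℝ × ℝ}
    (hz : z.1 ^ 2 / a ^ 2 - z.2 ^ 2 / b ^ 2 = 1) :
    IsPrincipalAxis (a ^ 2 + b ^ 2) z (z.1 / a ^ 2, -z.2 / b ^ 2) := by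
  unfold IsPrincipalAxis
  have hz' : z.1 * (z.1 / a ^ 2) + z.2 * (-z.2 / b ^ 2) = 1 := by rw [← hz]; ring
  rw [hz']
  field_simp
  ring

/-- `G(z,w) = (a² + b²)(2f·z₁² + w₁²) + (z₁w₂ − z₂w₁)²` is a first integral of the
Hooke billiard in the centered hyperbola `z₁²/a² − z₂²/b² = 1`: it is constant along
solutions of `z'' = −2f·z` and invariant under elastic reflections at the hyperbola. -/
theorem stmt_4 (f a b : ℝ) (ha : 0 < a) (hb : 0 < b) :
    (∀ I : Set ℝ, Convex ℝ I → ∀ z v : ℝ → ℝ × ℝ,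
      (∀ t ∈ I, HasDerivWithinAt z (v t) I t) →
      (∀ t ∈ I, HasDerivWithinAt v ((-(2 * f)) • z t) I t) →
      ∀ t ∈ I, ∀ t' ∈ I,
        hookeG f (a ^ 2 + b ^ 2) (z t) (v t) = hookeG f (a ^ 2 + b ^ 2) (z t') (v t')) ∧
    (∀ z w : ℝ × ℝ, z.1 ^ 2 / a ^ 2 - z.2 ^ 2 / b ^ 2 = 1 →
      ∀ n w' : ℝ × ℝ, n = (z.1 / a ^ 2, -z.2 / b ^ 2) →
      w' = w - (2 * ((w.1 * n.1 + w.2 * n.2) / (n.1 ^ 2 + n.2 ^ 2))) • n →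
      hookeG f (a ^ 2 + b ^ 2) z w' = hookeG f (a ^ 2 + b ^ 2) z w) := by
  refine ⟨fun I hI z v hz hv t ht t' ht' ↦ hookeG_eq_of_hooke hI hz hv ht ht', ?_⟩
  rintro z w hz n w' rfl rfl
  exact hookeG_reflect_of_isPrincipalAxis (isPrincipalAxis_hyperbola_normal ha.ne' hb.ne' hz) w
end
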